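/- Let h ∈ L²(ℝ). The following are equivalent: (i) ∫_ℝ conj(h(x−n)) h(x) dx = δ_{n,0}·‖h‖₂² for all n ∈ ℤ (the integer translates of h are orthogonal); (ii) p₂(h)(z) = ‖h‖₂² for a.e. z ∈ 𝕋. -/

import Mathlib

open MeasureTheory Complex Real Filter Topology

noncomputable section

/-- The Hilbert space `L²(ℝ)`. -/
abbrev L2R : Type := MeasureTheory.Lp ℂ 2 (volume : Measure ℝ)

/-- The normalized Haar measure `μ` of the circle `𝕋`, realized on the fundamental
domain `(0, 2π]` of `ℝ` via the identification `z = e^{-iω}`. -/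
def muT : Measure ℝ := (ENNReal.ofReal (2 * π))⁻¹ • (volume.restrict (Set.Ioc 0 (2 * π)))

/-- The measure on `𝕋 × [0,1]` underlying the Hilbert space `H_Z` (Zak-transform side). -/
def muZ : Measure (ℝ × ℝ) := muT.prod (volume.restrict (Set.Ioc 0 1))

/-- The Hilbert space `H_Z ≃ L²(𝕋 × [0,1])`, the range of the Zak transform. -/
abbrev HZ : Type := MeasureTheory.Lp ℂ 2 muZ

/-- `Z` is the Zak transform `(Zh)(z, x) = ∑ₙ zⁿ h(x + n)`, `z = e^{-iω}`, a unitary from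
`L²(ℝ)` onto `H_Z` (characterized on compactly supported functions, where the sum is
finite). -/
def IsZak (Z : L2R ≃ₗᵢ[ℂ] HZ) : Prop :=
  ∀ (g : ℝ → ℂ) (hg : MeasureTheory.MemLp g 2 (volume : Measure ℝ)),
    HasCompactSupport g →
      ⇑(Z (hg.toLp g)) =ᵐ[muZ] fun p : ℝ × ℝ =>
        ∑' n : ℤ, Complex.exp (-(Complex.I * (n : ℂ) * (p.1 : ℂ))) * g (p.2 + (n : ℝ))

/-!
Since `Z` is unitary and intertwines translation by `n` on `L²(ℝ)` with multiplication by `zⁿ`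
on `H_Z`, Fubini gives `∫ conj(h(x - n)) h(x) dx = ∫ e^{inω} p₂(h)(ω) dμ(ω)`: condition (i)
says that the nonnegative integrable function `p₂(h)` has the same Fourier coefficients as the
constant `‖h‖₂²`. By Stone–Weierstrass, the Fourier coefficients of a finite measure on the circle
determine it, so the measures with densities `p₂(h)` and `‖h‖₂²` agree, which is (ii).
-/

namespace AddCircle

variable {T : ℝ} [Fact (0 < T)]

theorem integral_eq_of_mem_span_fourier {P P' : Measure (AddCircle T)} [IsFiniteMeasure P]
    [IsFiniteMeasure P'] (h : ∀ n : ℤ, ∫ x, fourier n x ∂P = ∫ x, fourier n x ∂P')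
    {φ : C(AddCircle T, ℂ)} (hφ : φ ∈ Submodule.span ℂ (Set.range fourier)) :
    ∫ x, φ x ∂P = ∫ x, φ x ∂P' := by
  have hint (ψ : C(AddCircle T, ℂ)) (μ : Measure (AddCircle T)) [IsFiniteMeasure μ] :
      Integrable ψ μ :=
    (BoundedContinuousFunction.mkOfCompact ψ).integrable μ
  induction hφ using Submodule.span_induction with
  | mem _ hφ => obtain ⟨n, rfl⟩ := hφ; exact h n
  | zero => simp
  | add φ ψ _ _ hφ hψ =>
    simp only [ContinuousMap.add_apply]
    rw [integral_add (hint φ P) (hint ψ P), integral_add (hint φ P') (hint ψ P'), hφ, hψ]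
  | smul c φ _ hφ => simp only [ContinuousMap.smul_apply, integral_smul, hφ]

theorem measure_ext_of_integral_fourier_eq {P P' : Measure (AddCircle T)} [IsFiniteMeasure P]
    [IsFiniteMeasure P'] (h : ∀ n : ℤ, ∫ x, fourier n x ∂P = ∫ x, fourier n x ∂P') : P = P' := by
  refine ext_of_forall_mem_subalgebra_integral_eq_of_pseudoEMetric_complete_countable
    (A := fourierSubalgebra.comap (BoundedContinuousFunction.toContinuousMapStarₐ ℂ)) ?_ ?_
  · intro x y hxy
    obtain ⟨_, ⟨φ, hφ, rfl⟩, hne⟩ := fourierSubalgebra_separatesPoints hxy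
    exact ⟨_, ⟨_, ⟨BoundedContinuousFunction.mkOfCompact φ, hφ, rfl⟩, rfl⟩, hne⟩
  · intro g hg
    have hspan : (g : C(AddCircle T, ℂ)) ∈ Submodule.span ℂ (Set.range fourier) := by
      rw [← fourierSubalgebra_coe]; exact hg
    exact integral_eq_of_mem_span_fourier h hspan

theorem ae_eq_of_integral_fourier_mul_eq {μ : Measure (AddCircle T)} {f g : AddCircle T → ℝ}
    (hf : Integrable f μ) (hg : Integrable g μ) (hf0 : 0 ≤ᵐ[μ] f) (hg0 : 0 ≤ᵐ[μ] g)
    (h : ∀ n : ℤ, ∫ x, fourier n x * f x ∂μ = ∫ x, fourier n x * g x ∂μ) : f =ᵐ[μ] g := by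
  have hdensity {u : AddCircle T → ℝ} (hu : Integrable u μ) (hu0 : 0 ≤ᵐ[μ] u) (n : ℤ) :
      ∫ x, fourier n x ∂μ.withDensity (fun x => ENNReal.ofReal (u x)) =
        ∫ x, fourier n x * u x ∂μ := by
    rw [integral_withDensity_eq_integral_toReal_smul₀ hu.aemeasurable.ennreal_ofReal
      (ae_of_all _ fun _ => ENNReal.ofReal_lt_top)]
    refine integral_congr_ae ?_
    filter_upwards [hu0] with x hx
    rw [ENNReal.toReal_ofReal hx, Complex.real_smul, mul_comm]
  have := isFiniteMeasure_withDensity_ofReal hf.2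
  have := isFiniteMeasure_withDensity_ofReal hg.2
  have hP : μ.withDensity (fun x => ENNReal.ofReal (f x)) =
      μ.withDensity (fun x => ENNReal.ofReal (g x)) :=
    measure_ext_of_integral_fourier_eq fun n => by
      rw [hdensity hf hf0, hdensity hg hg0, h n]
  filter_upwards [(withDensity_eq_iff hf.aemeasurable.ennreal_ofReal
    hg.aemeasurable.ennreal_ofReal ((hasFiniteIntegral_iff_ofReal hf0).1 hf.2).ne).1 hP,
    hf0, hg0] with x hx hfx hgx
  exact (ENNReal.ofReal_eq_ofReal_iff hfx hgx).1 hx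

theorem measurable_liftIoc {a : ℝ} {B : Type*} [MeasurableSpace B] {f : ℝ → B}
    (hf : Measurable f) : Measurable (liftIoc T a f) :=
  hf.comp (measurable_subtype_coe.comp (measurableEquivIoc T a).measurable)

end AddCircle

namespace ZakTransform

instance : Fact (0 < 2 * π) := ⟨by positivity⟩

instance : IsProbabilityMeasure muT :=
  ⟨by rw [muT, Measure.smul_apply, Measure.restrict_apply_univ, Real.volume_Ioc, sub_zero,
    smul_eq_mul, ENNReal.inv_mul_cancel (by positivity) ENNReal.ofReal_ne_top]⟩

theorem measurePreserving_coe_muT :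
    MeasurePreserving ((↑) : ℝ → AddCircle (2 * π)) muT AddCircle.haarAddCircle := by
  have h := AddCircle.measurePreserving_mk (2 * π) 0
  rw [zero_add] at h
  refine ⟨h.measurable, ?_⟩
  rw [muT, Measure.map_smul, h.map_eq, AddCircle.volume_eq_smul_haarAddCircle, smul_smul,
    ENNReal.inv_mul_cancel (by positivity) ENNReal.ofReal_ne_top, one_smul]

theorem integral_comp_coe_muT {E : Type*} [NormedAddCommGroup E] [NormedSpace ℝ E]
    {F : AddCircle (2 * π) → E} (hF : AEStronglyMeasurable F AddCircle.haarAddCircle) :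
    ∫ ω, F ω ∂muT = ∫ x, F x ∂AddCircle.haarAddCircle := by
  rw [← measurePreserving_coe_muT.map_eq,
    integral_map measurePreserving_coe_muT.measurable.aemeasurable
      (measurePreserving_coe_muT.map_eq ▸ hF)]

theorem ae_liftIoc_coe_eq {B : Type*} (u : ℝ → B) :
    ∀ᵐ ω : ℝ ∂muT, AddCircle.liftIoc (2 * π) 0 u (ω : AddCircle (2 * π)) = u ω := by
  have : ∀ᵐ ω ∂muT, ω ∈ Set.Ioc 0 (2 * π) :=
    Measure.ae_smul_measure (ae_restrict_mem measurableSet_Ioc) _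
  filter_upwards [this] with ω hω
  exact AddCircle.liftIoc_coe_apply (by rwa [zero_add])

theorem fourier_coe_two_pi (n : ℤ) (ω : ℝ) :
    fourier n (ω : AddCircle (2 * π)) = exp (I * n * ω) := by
  rw [fourier_coe_apply]
  congr 1
  field_simp
  push_cast
  ring

theorem integral_exp_mul_const_muT (n : ℤ) (c : ℂ) :
    ∫ ω, exp (I * n * ω) * c ∂muT = if n = 0 then c else 0 := by
  have h := congr_fun (fourierCoeff_fourier (T := 2 * π) 0) (-n)
  simp only [fourierCoeff, fourier_zero, smul_eq_mul, mul_one, neg_neg] at h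
  simp_rw [integral_mul_const, ← fourier_coe_two_pi,
    integral_comp_coe_muT (map_continuous (fourier n)).aestronglyMeasurable, h]
  by_cases hn : n = 0 <;> simp [hn]

theorem ae_eq_of_integral_exp_mul_eq {q r : ℝ → ℝ} (hq : Measurable q) (hr : Measurable r)
    (hqi : Integrable q muT) (hri : Integrable r muT) (hq0 : 0 ≤ q) (hr0 : 0 ≤ r)
    (h : ∀ n : ℤ, ∫ ω, exp (I * n * ω) * q ω ∂muT = ∫ ω, exp (I * n * ω) * r ω ∂muT) :
    q =ᵐ[muT] r := by
  have hint {u : ℝ → ℝ} (hu : Measurable u) (hui : Integrable u muT) :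
      Integrable (AddCircle.liftIoc (2 * π) 0 u) AddCircle.haarAddCircle := by
    rw [← measurePreserving_coe_muT.integrable_comp
      (AddCircle.measurable_liftIoc hu).aestronglyMeasurable]
    exact hui.congr ((ae_liftIoc_coe_eq u).mono fun _ => Eq.symm)
  have hfourier {u : ℝ → ℝ} (hu : Measurable u) (n : ℤ) :
      ∫ x, fourier n x * AddCircle.liftIoc (2 * π) 0 u x ∂AddCircle.haarAddCircle =
        ∫ ω, exp (I * n * ω) * u ω ∂muT := by
    have hmeas : Measurable fun x => fourier n x * ((AddCircle.liftIoc (2 * π) 0 u x : ℝ) : ℂ) :=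
      (map_continuous _).measurable.mul (AddCircle.measurable_liftIoc hu).complex_ofReal
    rw [← integral_comp_coe_muT hmeas.aestronglyMeasurable]
    refine integral_congr_ae ?_
    filter_upwards [ae_liftIoc_coe_eq u] with ω hω
    rw [fourier_coe_two_pi, hω]
  have hlift := AddCircle.ae_eq_of_integral_fourier_mul_eq (hint hq hqi) (hint hr hri)
    (ae_of_all _ fun _ => hq0 _) (ae_of_all _ fun _ => hr0 _)
    fun n => by rw [hfourier hq, hfourier hr, h]
  filter_upwards [measurePreserving_coe_muT.quasiMeasurePreserving.ae_eq_comp hlift,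
    ae_liftIoc_coe_eq q, ae_liftIoc_coe_eq r] with ω hω hqω hrω
  rw [← hqω, ← hrω]
  exact hω

def translate (a : ℝ) : L2R →ₗᵢ[ℂ] L2R :=
  Lp.compMeasurePreservingₗᵢ ℂ (· - a) (measurePreserving_sub_right volume a)

theorem coeFn_translate (a : ℝ) (h : L2R) : translate a h =ᵐ[volume] fun x => h (x - a) :=
  Lp.coeFn_compMeasurePreserving h _

theorem inner_translate_self (a : ℝ) (h : L2R) :
    inner ℂ (translate a h) h = ∫ x, starRingEnd ℂ (h (x - a)) * h x := by
  rw [L2.inner_def]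
  refine integral_congr_ae ?_
  filter_upwards [coeFn_translate a h] with x hx
  rw [hx, RCLike.inner_apply, mul_comm]

/-- `zⁿ` at `z = e^{-iω}`, as a function of `(ω, x)`. -/
def zPow (n : ℤ) (p : ℝ × ℝ) : ℂ := exp (-(I * n * p.1))

theorem zPow_add (m n : ℤ) (p : ℝ × ℝ) : zPow (m + n) p = zPow m p * zPow n p := by
  rw [zPow, zPow, zPow, ← Complex.exp_add]
  push_cast
  ring_nf

theorem norm_zPow (n : ℤ) (p : ℝ × ℝ) : ‖zPow n p‖ = 1 := by
  rw [zPow, norm_exp]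
  simp

theorem continuous_zPow (n : ℤ) : Continuous (zPow n) := by
  unfold zPow; fun_prop

theorem memLp_top_zPow (n : ℤ) : MemLp (zPow n) ⊤ muZ :=
  memLp_top_of_bound (continuous_zPow n).aestronglyMeasurable 1
    (ae_of_all _ fun p => (norm_zPow n p).le)

def modulate (n : ℤ) : HZ →L[ℂ] HZ :=
  (ContinuousLinearMap.mul ℂ ℂ).holderL muZ ⊤ 2 2 ((memLp_top_zPow n).toLp _)

theorem coeFn_modulate (n : ℤ) (F : HZ) : modulate n F =ᵐ[muZ] fun p => zPow n p * F p := by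
  filter_upwards [(ContinuousLinearMap.mul ℂ ℂ).coeFn_holder (r := 2)
    ((memLp_top_zPow n).toLp _) F, (memLp_top_zPow n).coeFn_toLp] with p hp hz
  rw [modulate, ContinuousLinearMap.holderL_apply_apply, hp, hz]
  rfl

theorem tsum_zPow_mul_sub (n : ℤ) (g : ℝ → ℂ) (p : ℝ × ℝ) :
    ∑' m : ℤ, zPow m p * g (p.2 + m - n) = zPow n p * ∑' m : ℤ, zPow m p * g (p.2 + m) := by
  rw [← tsum_mul_left, ← (Equiv.addRight n).tsum_eq]
  refine tsum_congr fun m => ?_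
  rw [Equiv.coe_addRight, zPow_add, Int.cast_add, ← add_assoc, add_sub_cancel_right]
  ring

variable {Z : L2R ≃ₗᵢ[ℂ] HZ}

theorem map_translate_toLp (hZ : IsZak Z) (n : ℤ) {g : ℝ → ℂ} (hg : MemLp g 2 volume)
    (hgc : HasCompactSupport g) : Z (translate n (hg.toLp g)) = modulate n (Z (hg.toLp g)) := by
  have hg' := hg.comp_measurePreserving (measurePreserving_sub_right volume (n : ℝ))
  have hgc' : HasCompactSupport (g ∘ (· - (n : ℝ))) := hgc.comp_homeomorph (Homeomorph.subRight _)
  change Z (hg'.toLp _) = _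
  refine Lp.ext ?_
  filter_upwards [hZ _ hg' hgc', coeFn_modulate n (Z (hg.toLp g)), hZ g hg hgc] with p h1 h2 h3
  rw [h1, h2, h3]
  exact tsum_zPow_mul_sub n g p

theorem map_translate (hZ : IsZak Z) (n : ℤ) (h : L2R) :
    Z (translate n h) = modulate n (Z h) := by
  refine congr_fun (Continuous.ext_on (Lp.dense_hasCompactSupport_contDiff (by norm_num))
    (Z.continuous.comp (translate n).continuous) ((modulate n).continuous.comp Z.continuous) ?_) h
  rintro f ⟨g, hfg, hgc, -⟩
  have hg : MemLp g 2 volume := (Lp.memLp f).ae_eq hfg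
  obtain rfl : f = hg.toLp g := Lp.ext (hfg.trans hg.coeFn_toLp.symm)
  exact map_translate_toLp hZ n hg hgc

/-- `p2 (Z h)` is the paper's `p₂(h)`, read at `z = e^{-iω}`. -/
def p2 (F : HZ) (ω : ℝ) : ℝ := ∫ x in Set.Ioc (0 : ℝ) 1, ‖F (ω, x)‖ ^ 2

theorem p2_nonneg (F : HZ) : 0 ≤ p2 F := fun _ => integral_nonneg fun _ => by positivity

theorem integrable_norm_sq {α : Type*} [MeasurableSpace α] {μ : Measure α} (F : Lp ℂ 2 μ) :
    Integrable (fun p => ‖F p‖ ^ 2) μ :=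
  (memLp_two_iff_integrable_sq_norm (Lp.aestronglyMeasurable F)).1 (Lp.memLp F)

theorem integrable_p2 (F : HZ) : Integrable (p2 F) muT :=
  (integrable_norm_sq F).integral_prod_left

theorem measurable_p2 (F : HZ) : Measurable (p2 F) :=
  ((Lp.stronglyMeasurable F).norm.pow 2).integral_prod_right'.measurable

theorem inner_modulate_self (n : ℤ) (F : HZ) :
    inner ℂ (modulate n F) F = ∫ ω, exp (I * n * ω) * p2 F ω ∂muT := by
  have hint : Integrable (fun p : ℝ × ℝ => exp (I * n * p.1) * ((‖F p‖ ^ 2 : ℝ) : ℂ)) muZ :=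
    (integrable_norm_sq F).ofReal.bdd_mul (by fun_prop) (c := 1)
      (ae_of_all _ fun p => by simp [norm_exp])
  calc inner ℂ (modulate n F) F
      = ∫ p, exp (I * n * p.1) * ((‖F p‖ ^ 2 : ℝ) : ℂ) ∂muZ := by
        rw [L2.inner_def]
        refine integral_congr_ae ?_
        filter_upwards [coeFn_modulate n F] with p hp
        rw [hp, RCLike.inner_apply, map_mul, mul_left_comm, mul_conj', zPow, ← exp_conj]
        push_cast
        simp only [map_neg, map_mul, conj_I, conj_ofReal, map_intCast]
        ring_nf
    _ = ∫ ω : ℝ, (∫ x in Set.Ioc (0 : ℝ) 1, exp (I * n * ω) * ((‖F (ω, x)‖ ^ 2 : ℝ) : ℂ)) ∂muT :=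
        integral_prod _ hint
    _ = ∫ ω, exp (I * n * ω) * p2 F ω ∂muT := by
        congr 1 with ω
        rw [integral_const_mul, p2, integral_complex_ofReal]

theorem integral_conj_translate_mul_eq (hZ : IsZak Z) (h : L2R) (n : ℤ) :
    ∫ x, starRingEnd ℂ (h (x - n)) * h x = ∫ ω, exp (I * n * ω) * p2 (Z h) ω ∂muT := by
  rw [← inner_translate_self, ← Z.inner_map_map, map_translate hZ, inner_modulate_self]

end ZakTransform

open ZakTransform in
/-- Lemma 7.1: for `h ∈ L²(ℝ)` the following are equivalent:
(i) the integer translates of `h` are orthogonal, i.e.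
`∫ conj(h(x-n)) h(x) dx = δ_{n,0} ‖h‖₂²` for all `n ∈ ℤ`;
(ii) `p₂(h)(z) = ∫₀¹ |(Zh)(z,x)|² dx = ‖h‖₂²` for a.e. `z ∈ 𝕋`. -/
theorem orthogonal_translates_iff_p2_const
    (Z : L2R ≃ₗᵢ[ℂ] HZ) (hZ : IsZak Z) (h : L2R) :
    (∀ n : ℤ, (∫ x : ℝ, (starRingEnd ℂ) ((⇑h) (x - (n : ℝ))) * (⇑h) x) =
        if n = 0 then ((‖h‖ ^ 2 : ℝ) : ℂ) else 0) ↔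
      ∀ᵐ ω ∂muT, (∫ x in Set.Ioc (0 : ℝ) 1, ‖(⇑(Z h)) (ω, x)‖ ^ 2) = ‖h‖ ^ 2 := by
  simp_rw [integral_conj_translate_mul_eq hZ h, ← integral_exp_mul_const_muT]
  constructor
  · exact fun H => ae_eq_of_integral_exp_mul_eq (measurable_p2 _) measurable_const
      (integrable_p2 _) (integrable_const _) (p2_nonneg _) (fun _ => by positivity) H
  · intro H n
    refine integral_congr_ae ?_
    filter_upwards [H] with ω hω
    rw [p2, hω]

end
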